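/- Let G = (V,E,w) be a connected weighted graph with positive edge weights and let T be a spanning tree of G (with the same weights on tree edges). If the total off-tree stretch satisfies |stretch_T(G)| = Σ_{e ∈ E∖E_T} stretch_T(e) ≤ 1, then for every real vector x: (1/2)·xᵀL_G x ≤ xᵀL_T x ≤ xᵀL_G x; equivalently G ⪯ 2T and T ⪯ G. -/
import Mathlib


/-- `IsWalkFrom endA endB F a b l` says that the list of edges `l`, each belonging to the
edge set `F`, forms a walk from vertex `a` to vertex `b`; each edge may be traversed in
either direction. -/
def IsWalkFrom {V ε : Type} (endA endB : ε → V) (F : Finset ε) : V → V → List ε → Prop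
  | a, b, [] => a = b
  | a, b, f :: rest => f ∈ F ∧
      ((endA f = a ∧ IsWalkFrom endA endB F (endB f) b rest) ∨
       (endB f = a ∧ IsWalkFrom endA endB F (endA f) b rest))

lemma cs_step (W s q d1 d2 : ℝ) (hW : 0 < W) (hs : 0 ≤ s) (hq : 0 ≤ q)
    (h : d2^2 ≤ s*q) : (d1+d2)^2 ≤ (1/W + s)*(W*d1^2 + q) := by
  rcases eq_or_lt_of_le hs with hs0 | hs0
  · have hd2 : d2 = 0 := by nlinarith [sq_nonneg d2]
    subst hd2; subst hs0
    rw [div_add' _ _ _ hW.ne', div_mul_eq_mul_div, le_div_iff₀ hW]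
    nlinarith
  · rw [div_add' _ _ _ hW.ne', div_mul_eq_mul_div, le_div_iff₀ hW]
    nlinarith [sq_nonneg (s*W*d1 - d2), mul_pos hW hs0, mul_nonneg hs hq,
      mul_nonneg (mul_nonneg hs hs) hq]

lemma walk_mem {V ε : Type} (endA endB : ε → V) (F : Finset ε) :
    ∀ (l : List ε) (a b : V), IsWalkFrom endA endB F a b l → ∀ f ∈ l, f ∈ F := by
  intro l
  induction l with
  | nil => intro a b _ f hf; simp at hf
  | cons g rest ih =>
    intro a b hwalk f hf
    obtain ⟨hg, hcase⟩ := hwalk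
    rcases List.mem_cons.mp hf with rfl | hf
    · exact hg
    · rcases hcase with ⟨_, h⟩ | ⟨_, h⟩
      · exact ih _ _ h f hf
      · exact ih _ _ h f hf

lemma walk_cs {n m : ℕ} (endA endB : Fin m → Fin n) (w : Fin m → ℝ)
    (hw : ∀ e, 0 < w e) (F : Finset (Fin m)) (x : Fin n → ℝ) :
    ∀ (l : List (Fin m)) (a b : Fin n), IsWalkFrom endA endB F a b l →
      (x a - x b) ^ 2 ≤ (l.map fun f => 1 / w f).sum *
        (l.map fun f => w f * (x (endA f) - x (endB f)) ^ 2).sum := by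
  intro l
  induction l with
  | nil => intro a b h; cases h; simp
  | cons g rest ih =>
    intro a b hwalk
    obtain ⟨hg, hcase⟩ := hwalk
    have hs : 0 ≤ (rest.map fun f => 1 / w f).sum := by
      apply List.sum_nonneg; intro y hy
      obtain ⟨f, _, rfl⟩ := List.mem_map.mp hy
      exact div_nonneg zero_le_one (hw f).le
    have hq : 0 ≤ (rest.map fun f => w f * (x (endA f) - x (endB f)) ^ 2).sum := by
      apply List.sum_nonneg; intro y hy
      obtain ⟨f, _, rfl⟩ := List.mem_map.mp hy
      exact mul_nonneg (hw f).le (sq_nonneg _)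
    simp only [List.map_cons, List.sum_cons]
    rcases hcase with ⟨ha, h⟩ | ⟨ha, h⟩
    · have hIH := ih _ _ h
      have : x a - x b = (x (endA g) - x (endB g)) + (x (endB g) - x b) := by
        rw [ha]; ring
      rw [this]
      exact cs_step (w g) _ _ _ _ (hw g) hs hq hIH
    · have hIH := ih _ _ h
      have heq : x a - x b = (-(x (endA g) - x (endB g))) + (x (endA g) - x b) := by
        rw [ha]; ring
      rw [heq]
      have h2 := cs_step (w g) _ _ (-(x (endA g) - x (endB g))) (x (endA g) - x b)
        (hw g) hs hq hIH
      rw [neg_sq] at h2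
      exact h2


/-- Let `G` be a connected weighted graph with positive edge weights (vertices `Fin n`,
edges `Fin m` with endpoints `endA e`, `endB e` and weight `w e`) and let `T` be a
spanning tree of `G`, given by its edge set `ET` (connected and with `n - 1` edges), with
the same weights on tree edges.  For each edge `e`, `path e` is the unique tree path
joining its endpoints, and `stretch_T(e) = w e · ∑_{f ∈ path e} 1/w f`.
If the total off-tree stretch satisfies `∑_{e ∉ ET} stretch_T(e) ≤ 1`, then for every real
vector `x`, `(1/2)·xᵀL_G x ≤ xᵀL_T x ≤ xᵀL_G x` (i.e. `G ⪯ 2T` and `T ⪯ G`). -/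
theorem small_stretch_tree_precondition
    (n m : ℕ) (endA endB : Fin m → Fin n) (w : Fin m → ℝ)
    (hw : ∀ e, 0 < w e)
    (hGconn : ∀ a b : Fin n, ∃ l, IsWalkFrom endA endB Finset.univ a b l)
    (ET : Finset (Fin m))
    (hTconn : ∀ a b : Fin n, ∃ l, IsWalkFrom endA endB ET a b l)
    (hTcard : ET.card = n - 1)
    (path : Fin m → List (Fin m))
    (hpath : ∀ e, IsWalkFrom endA endB ET (endA e) (endB e) (path e) ∧ (path e).Nodup)
    (hstretch : ∑ e ∈ Finset.univ.filter (· ∉ ET),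
        w e * ((path e).map fun f => 1 / w f).sum ≤ 1)
    (x : Fin n → ℝ) :
    (1 / 2) * ∑ e, w e * (x (endA e) - x (endB e)) ^ 2
        ≤ ∑ e ∈ ET, w e * (x (endA e) - x (endB e)) ^ 2 ∧
      ∑ e ∈ ET, w e * (x (endA e) - x (endB e)) ^ 2
        ≤ ∑ e, w e * (x (endA e) - x (endB e)) ^ 2 := by
  have hterm : ∀ e, 0 ≤ w e * (x (endA e) - x (endB e)) ^ 2 :=
    fun e => mul_nonneg (hw e).le (sq_nonneg _)
  have hright : ∑ e ∈ ET, w e * (x (endA e) - x (endB e)) ^ 2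
      ≤ ∑ e, w e * (x (endA e) - x (endB e)) ^ 2 :=
    Finset.sum_le_sum_of_subset_of_nonneg (Finset.subset_univ ET) fun e _ _ => hterm e
  refine ⟨?_, hright⟩
  set QT := ∑ e ∈ ET, w e * (x (endA e) - x (endB e)) ^ 2 with hQTdef
  have hQT : 0 ≤ QT := Finset.sum_nonneg fun e _ => hterm e
  have hpathQ : ∀ e, ((path e).map fun f => w f * (x (endA f) - x (endB f)) ^ 2).sum ≤ QT := by
    intro e
    obtain ⟨hwk, hnd⟩ := hpath e
    have hsub : (path e).toFinset ⊆ ET := fun f hf =>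
      walk_mem endA endB ET (path e) _ _ hwk f (List.mem_toFinset.mp hf)
    calc ((path e).map fun f => w f * (x (endA f) - x (endB f)) ^ 2).sum
        = ∑ f ∈ (path e).toFinset, w f * (x (endA f) - x (endB f)) ^ 2 :=
          (List.sum_toFinset _ hnd).symm
      _ ≤ QT := Finset.sum_le_sum_of_subset_of_nonneg hsub fun f _ _ => hterm f
  have hoff : ∀ e, w e * (x (endA e) - x (endB e)) ^ 2
      ≤ (w e * ((path e).map fun f => 1 / w f).sum) * QT := by
    intro e
    have h1 := walk_cs endA endB w hw ET x (path e) _ _ (hpath e).1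
    have hSnn : 0 ≤ ((path e).map fun f => 1 / w f).sum := by
      apply List.sum_nonneg; intro y hy
      obtain ⟨f, _, rfl⟩ := List.mem_map.mp hy
      exact div_nonneg zero_le_one (hw f).le
    calc w e * (x (endA e) - x (endB e)) ^ 2
        ≤ w e * (((path e).map fun f => 1 / w f).sum *
            ((path e).map fun f => w f * (x (endA f) - x (endB f)) ^ 2).sum) :=
          mul_le_mul_of_nonneg_left h1 (hw e).le
      _ ≤ w e * (((path e).map fun f => 1 / w f).sum * QT) :=
          mul_le_mul_of_nonneg_left
            (mul_le_mul_of_nonneg_left (hpathQ e) hSnn) (hw e).le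
      _ = (w e * ((path e).map fun f => 1 / w f).sum) * QT := by ring
  have hsumoff : ∑ e ∈ Finset.univ.filter (· ∉ ET),
      w e * (x (endA e) - x (endB e)) ^ 2 ≤ QT := by
    calc ∑ e ∈ Finset.univ.filter (· ∉ ET), w e * (x (endA e) - x (endB e)) ^ 2
        ≤ ∑ e ∈ Finset.univ.filter (· ∉ ET),
            (w e * ((path e).map fun f => 1 / w f).sum) * QT :=
          Finset.sum_le_sum fun e _ => hoff e
      _ = (∑ e ∈ Finset.univ.filter (· ∉ ET),
            w e * ((path e).map fun f => 1 / w f).sum) * QT := by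
          rw [Finset.sum_mul]
      _ ≤ 1 * QT := mul_le_mul_of_nonneg_right hstretch hQT
      _ = QT := one_mul _
  have hsplit : ∑ e, w e * (x (endA e) - x (endB e)) ^ 2
      = QT + ∑ e ∈ Finset.univ.filter (· ∉ ET), w e * (x (endA e) - x (endB e)) ^ 2 := by
    rw [hQTdef, ← Finset.sum_filter_add_sum_filter_not Finset.univ (· ∈ ET)]
    congr 1
    apply Finset.sum_congr _ fun _ _ => rfl
    ext e; simp
  rw [hsplit]
  linarith
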